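/- For every c > 2 there exists λ₂ > 0 such that for every λ > λ₂ and every positive solution u of the radial problem (r^{N−1} φ(u′(r)))′ = −λ r^{N−1} f(u(r)) on (0,1), u′(0) = 0, u(1) = 0, there exists r₂ ∈ [3/4, 1) with u(r₂) = u₀/c. -/

import Mathlib

open Set Filter MeasureTheory

/-- `u` (with derivative `u'`) is a positive solution of the radial problem
`(r^(N-1) φ(u'(r)))' = -λ r^(N-1) f(u(r))` on `(0,1)`, with `u'(0) = 0`, `u(1) = 0`,
`u ∈ C¹([0,1])`, `φ ∘ u' ∈ C¹((0,1))`, and `u > 0` on `[0,1)`. -/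
structure IsPosSol (N : ℕ) (φ f : ℝ → ℝ) (lam : ℝ) (u u' : ℝ → ℝ) : Prop where
  hasDeriv : ∀ r ∈ Set.Icc (0:ℝ) 1, HasDerivAt u (u' r) r
  contDeriv : ContinuousOn u' (Set.Icc 0 1)
  pos : ∀ r ∈ Set.Ico (0:ℝ) 1, 0 < u r
  phiC1 : ∃ w : ℝ → ℝ, ContinuousOn w (Set.Ioo 0 1) ∧
    ∀ r ∈ Set.Ioo (0:ℝ) 1, HasDerivAt (fun s => φ (u' s)) (w r) r
  eqn : ∀ r ∈ Set.Ioo (0:ℝ) 1,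
    HasDerivAt (fun s => s ^ (N - 1) * φ (u' s)) (-(lam * r ^ (N - 1) * f (u r))) r
  deriv_zero : u' 0 = 0
  bd : u 1 = 0

/-!
Suppose `u` never takes the value `a = u₀/c` on `[3/4, 1)`. Since `u(1) = 0`, then `0 < u < a` on
`[3/4, 1)`, so `f(u) ≤ f(a) < 0` there, and by the mean value theorem `|u'(ξ)| ≤ 8a` at some
`ξ ∈ (3/4, 7/8)`. Integrating the equation over `[ξ, 1]`, where `r^(N-1) φ(u')` grows at rate at
least `λ ξ^(N-1) (-f(a))` and ends nonpositive because `u'(1) ≤ 0`, gives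
`φ(u'(ξ)) ≤ -λ (-f(a)) / 8`. As `φ` is bounded on `[-8a, 8a]`, this fails for large `λ`.
-/

theorem MonotoneOn.lt_zero_of_lt_unique_zero {f : ℝ → ℝ} {u0 s : ℝ}
    (hfm : MonotoneOn f (Ici 0)) (hfu0 : f u0 = 0)
    (hzero : ∀ s : ℝ, 0 ≤ s → f s = 0 → s = u0) (hs0 : 0 ≤ s) (hs : s < u0) : f s < 0 := by
  refine (hfm hs0 (hs0.trans hs.le) hs.le |>.trans_eq hfu0).lt_of_ne fun h => ?_
  exact hs.ne (hzero s hs0 h)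

theorem forall_lt_of_continuousOn_of_forall_ne {u : ℝ → ℝ} {a b y : ℝ}
    (hu : ContinuousOn u (Icc a b)) (hb : u b < y) (hne : ∀ x ∈ Ico a b, u x ≠ y) :
    ∀ x ∈ Icc a b, u x < y := by
  intro x hx
  rcases hx.2.eq_or_lt with rfl | hxb
  · exact hb
  by_contra! hxy
  obtain ⟨z, hz, huz⟩ := intermediate_value_Icc' hxb.le (hu.mono (Icc_subset_Icc hx.1 le_rfl))
    ⟨hb.le, hxy⟩
  have hzb : z ≠ b := by rintro rfl; exact hb.ne huz
  exact hne z ⟨hx.1.trans hz.1, hz.2.lt_of_ne hzb⟩ huz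

theorem HasDerivWithinAt.nonpos_of_isMinOn_Icc_right {u : ℝ → ℝ} {a b d : ℝ} (hab : a < b)
    (hd : HasDerivWithinAt u d (Icc a b) b) (hmin : IsMinOn u (Icc a b) b) : d ≤ 0 := by
  have hy : a - b ∈ posTangentConeAt (Icc a b) b :=
    sub_mem_posTangentConeAt_of_segment_subset (by rw [segment_symm, segment_eq_Icc hab.le])
  have := hmin.localize.hasFDerivWithinAt_nonneg hd hy
  simp only [ContinuousLinearMap.toSpanSingleton_apply, smul_eq_mul] at this
  nlinarith

namespace IsPosSol

variable {N : ℕ} {φ f : ℝ → ℝ} {lam : ℝ} {u u' : ℝ → ℝ}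

theorem continuousOn (sol : IsPosSol N φ f lam u u') : ContinuousOn u (Icc 0 1) :=
  fun r hr => (sol.hasDeriv r hr).continuousAt.continuousWithinAt

theorem deriv_one_nonpos (sol : IsPosSol N φ f lam u u') : u' 1 ≤ 0 := by
  refine (sol.hasDeriv 1 ⟨zero_le_one, le_rfl⟩).hasDerivWithinAt.nonpos_of_isMinOn_Icc_right
    zero_lt_one fun x hx => ?_
  show u 1 ≤ u x
  rcases hx.2.eq_or_lt with rfl | hx1
  · exact le_rfl
  · rw [sol.bd]; exact (sol.pos x ⟨hx.1, hx1⟩).le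

theorem phi_deriv_le (sol : IsPosSol N φ f lam u u') (hφc : Continuous φ)
    (hφ_nonpos : ∀ s ≤ 0, φ s ≤ 0) (hlam : 0 ≤ lam) {m ξ : ℝ} (hm : 0 ≤ m)
    (hξ : ξ ∈ Ioo 0 1) (hf : ∀ r ∈ Ioo ξ 1, f (u r) ≤ -m) :
    φ (u' ξ) ≤ -(lam * m * (1 - ξ)) := by
  set g : ℝ → ℝ := fun s => s ^ (N - 1) * φ (u' s)
  have hg1 : g 1 ≤ 0 := by simpa [g] using hφ_nonpos _ sol.deriv_one_nonpos
  have hgc : ContinuousOn g (Icc ξ 1) :=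
    ((continuous_pow _).continuousOn.mul (hφc.comp_continuousOn sol.contDeriv)).mono
      (Icc_subset_Icc hξ.1.le le_rfl)
  obtain ⟨η, hη, hslope⟩ := exists_hasDerivAt_eq_slope g _ hξ.2 hgc
    fun x hx => sol.eqn x ⟨hξ.1.trans hx.1, hx.2⟩
  have hξpow : 0 < ξ ^ (N - 1) := pow_pos hξ.1 _
  have hrate : lam * m * ξ ^ (N - 1) ≤ -(lam * η ^ (N - 1) * f (u η)) :=
    calc lam * m * ξ ^ (N - 1) ≤ lam * m * η ^ (N - 1) :=
          mul_le_mul_of_nonneg_left (pow_le_pow_left₀ hξ.1.le hη.1.le _) (mul_nonneg hlam hm)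
      _ ≤ lam * η ^ (N - 1) * -f (u η) := by
          rw [mul_right_comm]
          exact mul_le_mul_of_nonneg_left (by linarith [hf η hη])
            (mul_nonneg hlam (pow_nonneg (hξ.1.trans hη.1).le _))
      _ = _ := by ring
  have h1ξ : 0 < 1 - ξ := sub_pos.2 hξ.2
  have hincr : g 1 - g ξ = -(lam * η ^ (N - 1) * f (u η)) * (1 - ξ) := by
    rw [hslope, div_mul_cancel₀ _ h1ξ.ne']
  have hgξ : ξ ^ (N - 1) * φ (u' ξ) ≤ ξ ^ (N - 1) * -(lam * m * (1 - ξ)) := by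
    have := mul_le_mul_of_nonneg_right hrate h1ξ.le
    change g ξ ≤ _
    linarith
  exact le_of_mul_le_mul_left hgξ hξpow

theorem lam_mul_le (sol : IsPosSol N φ f lam u u') (hφc : Continuous φ)
    (hφ_nonpos : ∀ s ≤ 0, φ s ≤ 0) (hlam : 0 ≤ lam) {a m C : ℝ} (hm : 0 ≤ m)
    (hf : ∀ s ∈ Ico 0 a, f s ≤ -m) (hC : ∀ s ∈ Icc (-(8 * a)) (8 * a), -C ≤ φ s)
    (hu : ∀ r ∈ Icc (3/4 : ℝ) 1, u r < a) : lam * m ≤ 8 * C := by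
  have hu_mem : ∀ r ∈ Ico (3/4 : ℝ) 1, u r ∈ Ico 0 a := fun r hr =>
    ⟨(sol.pos r ⟨by linarith [hr.1], hr.2⟩).le, hu r ⟨hr.1, hr.2.le⟩⟩
  obtain ⟨ξ, hξ, hslope⟩ := exists_hasDerivAt_eq_slope u u' (by norm_num : (3/4 : ℝ) < 7/8)
    (sol.continuousOn.mono (Icc_subset_Icc (by norm_num) (by norm_num)))
    fun x hx => sol.hasDeriv x ⟨by linarith [hx.1], by linarith [hx.2]⟩
  have hu'ξ : u' ξ = 8 * (u (7/8) - u (3/4)) := by rw [hslope]; ring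
  obtain ⟨h78, h78'⟩ := hu_mem (7/8) (by norm_num)
  obtain ⟨h34, h34'⟩ := hu_mem (3/4) (by norm_num)
  have hlower := hC (u' ξ) ⟨by rw [hu'ξ]; linarith, by rw [hu'ξ]; linarith⟩
  have hupper := sol.phi_deriv_le hφc hφ_nonpos hlam hm (ξ := ξ)
    ⟨by linarith [hξ.1], by linarith [hξ.2]⟩
    fun r hr => hf _ (hu_mem r ⟨by linarith [hξ.1, hr.1], hr.2⟩)
  have : lam * m * (1/8) ≤ lam * m * (1 - ξ) :=
    mul_le_mul_of_nonneg_left (by linarith [hξ.2]) (mul_nonneg hlam hm)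
  linarith

end IsPosSol

theorem exists_r2_threequarters_general    (N : ℕ)
    (ϕ φ : ℝ → ℝ)
    (hϕc : Continuous ϕ) (hϕnn : ∀ s, 0 ≤ ϕ s)
    (hφ : ∀ s, φ s = ϕ s * s)
    (f : ℝ → ℝ) (hfm : MonotoneOn f (Set.Ici 0))
    (u0 : ℝ) (hu0 : 0 < u0) (hfu0 : f u0 = 0)
    (hzero : ∀ s : ℝ, 0 ≤ s → f s = 0 → s = u0)
    (c : ℝ) (hc : 2 < c) :
    ∃ lam2 : ℝ, 0 < lam2 ∧ ∀ lam : ℝ, lam2 < lam →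
      ∀ u u' : ℝ → ℝ, IsPosSol N φ f lam u u' →
        ∃ r2 ∈ Set.Ico (3/4 : ℝ) 1, u r2 = u0 / c := by
  have hφc : Continuous φ := by rw [funext hφ]; exact hϕc.mul continuous_id
  have hφ_nonpos : ∀ s ≤ 0, φ s ≤ 0 := fun s hs =>
    (hφ s).trans_le (mul_nonpos_of_nonneg_of_nonpos (hϕnn s) hs)
  set a := u0 / c
  have ha : 0 < a := div_pos hu0 (by linarith)
  have hm : 0 < -f a :=
    neg_pos.2 (hfm.lt_zero_of_lt_unique_zero hfu0 hzero ha.le (div_lt_self hu0 (by linarith)))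
  obtain ⟨C, hC0, hC⟩ := ((isCompact_Icc (a := -(8 * a)) (b := 8 * a)).image_of_continuousOn
    hφc.continuousOn).isBounded.exists_pos_norm_le
  refine ⟨8 * C / -f a, div_pos (by linarith) hm, fun lam hlam u u' sol => ?_⟩
  by_contra! hne
  have hu : ∀ r ∈ Icc (3/4 : ℝ) 1, u r < a := forall_lt_of_continuousOn_of_forall_ne
    (sol.continuousOn.mono (Icc_subset_Icc (by norm_num) le_rfl)) (by rw [sol.bd]; exact ha) hne
  have hbound := sol.lam_mul_le hφc hφ_nonpos ((div_pos (by linarith) hm).le.trans hlam.le) hm.le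
    (fun s hs => by rw [neg_neg]; exact hfm hs.1 ha.le hs.2.le)
    (fun s hs => neg_le_of_abs_le (hC _ (mem_image_of_mem φ hs))) hu
  rw [div_lt_iff₀ hm] at hlam
  linarith

theorem exists_r2_threequarters    (N : ℕ) (hN : 1 < N)
    (ϕ φ : ℝ → ℝ)
    (hϕc : Continuous ϕ) (hϕnn : ∀ s, 0 ≤ ϕ s) (hϕeven : ∀ s, ϕ (-s) = ϕ s)
    (hϕdiff : ∀ s : ℝ, s ≠ 0 → DifferentiableAt ℝ ϕ s)
    (hϕmono : StrictMonoOn ϕ (Set.Ioi 0))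
    (hφ : ∀ s, φ s = ϕ s * s)
    (p c1 c2 : ℝ) (hp : 1 < p) (hc1 : 0 < c1) (hc2 : 0 < c2)
    (hgrow : ∀ r : ℝ, 0 ≤ r → c2 * r ^ (p - 1) ≤ φ r ∧ φ r ≤ c1 * r ^ (p - 1))
    (f : ℝ → ℝ) (hfc : ContinuousOn f (Set.Ici 0)) (hfm : MonotoneOn f (Set.Ici 0))
    (hf0 : f 0 < 0) (u0 : ℝ) (hu0 : 0 < u0) (hfu0 : f u0 = 0)
    (hzero : ∀ s : ℝ, 0 ≤ s → f s = 0 → s = u0)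
    (c : ℝ) (hc : 2 < c) :
    ∃ lam2 : ℝ, 0 < lam2 ∧ ∀ lam : ℝ, lam2 < lam →
      ∀ u u' : ℝ → ℝ, IsPosSol N φ f lam u u' →
        ∃ r2 ∈ Set.Ico (3/4 : ℝ) 1, u r2 = u0 / c :=
  exists_r2_threequarters_general N ϕ φ hϕc hϕnn hφ f hfm u0 hu0 hfu0 hzero c hc
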